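/- arXiv:1506.06482 — 4 statements merged into one kernel-verified Lean document; each statement's English description precedes it below -/
import Mathlib

section
/- For every real t ≠ 0, ∫_{[0,π]²} e^{2it(cosθ₁ + cosθ₂)} δ₂(θ₁,θ₂) dθ₁ dθ₂ = 4·J₁(2t)²/t² − 6·J₁(2t)·J₂(2t)/t³ + 4·J₂(2t)²/t², where J₁ and J₂ are the Bessel functions of the first kind. -/
open MeasureTheory

/-- The Bessel function of the first kind of integer order `n`,
`J_n(x) = Σ_{k=0}^∞ (−1)^k/(k!·(k+n)!) · (x/2)^{2k+n}`. -/
noncomputable def besselJ (n : ℕ) (x : ℝ) : ℝ :=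
  ∑' k : ℕ, (-1 : ℝ) ^ k / (k.factorial * (k + n).factorial) * (x / 2) ^ (2 * k + n)

/-- The Weyl density `δ₂` of `USp₄` on `[0,π]²`. -/
noncomputable def weylDensity2 (x y : ℝ) : ℝ :=
  (2 / Real.pi ^ 2) * Real.sin x ^ 2 * Real.sin y ^ 2 *
    (2 * Real.cos y - 2 * Real.cos x) ^ 2

/-!
Expanding `(cos θ₂ - cos θ₁)²`, the integrand becomes a sum of three products of functions of one
variable, so by Fubini the integral is `(16/π²)(Φ₀Φ₂ - Φ₁²)` at `z = 2t`, where
`Φₘ(z) = ∫₀^π e^{iz cos θ} sin²θ cosᵐθ dθ`. Expanding the exponential and integrating term by term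
against the moments `∫₀^π cosⁿθ sin²θ dθ` (zero for odd `n`, `π(2j)!/(2·4ʲ j!(j+1)!)` for
`n = 2j`) gives `Φ₀ = (π/2)·J₁(z)/(z/2)`, `Φ₁ = i(πz/4)·J₂(z)/(z/2)²` and
`Φ₂ = Φ₀ - (3π/4)·J₂(z)/(z/2)²`.
-/

open Real Nat
open Complex (I)
open scoped Complex

lemma hasSum_integral_cexp_mul_pow {α : Type*} [MeasurableSpace α] {μ : Measure α}
    {c f : α → ℂ} {C : ℝ} (hc : AEStronglyMeasurable c μ) (hcC : ∀ a, ‖c a‖ ≤ C)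
    (hf : Integrable f μ) (w : ℂ) :
    HasSum (fun k : ℕ => w ^ k / k ! * ∫ a, c a ^ k * f a ∂μ)
      (∫ a, cexp (w * c a) * f a ∂μ) := by
  set F : ℕ → α → ℂ := fun k a => w ^ k / k ! * (c a ^ k * f a)
  have hF_int (k : ℕ) : Integrable (F k) μ :=
    ((hf.bdd_mul (hc.pow k) (.of_forall fun a => norm_pow (c a) k ▸
      pow_le_pow_left₀ (norm_nonneg _) (hcC a) k)).const_mul _)
  have hF_norm (k : ℕ) : ∫ a, ‖F k a‖ ∂μ ≤ (‖w‖ * C) ^ k / k ! * ∫ a, ‖f a‖ ∂μ := by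
    rw [← integral_const_mul]
    refine integral_mono_of_nonneg (.of_forall fun a => norm_nonneg _)
      (hf.norm.const_mul _) (.of_forall fun a => ?_)
    simp only [F, norm_mul, norm_div, norm_pow, Complex.norm_natCast, mul_pow]
    calc ‖w‖ ^ k / k ! * (‖c a‖ ^ k * ‖f a‖) = ‖w‖ ^ k / k ! * ‖f a‖ * ‖c a‖ ^ k := by ring
      _ ≤ ‖w‖ ^ k / k ! * ‖f a‖ * C ^ k := by gcongr; exact hcC a
      _ = ‖w‖ ^ k * C ^ k / k ! * ‖f a‖ := by ring
  have hF_sum : Summable fun k => ∫ a, ‖F k a‖ ∂μ :=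
    .of_nonneg_of_le (fun k => integral_nonneg fun a => norm_nonneg _) hF_norm
      ((Real.summable_pow_div_factorial _).mul_right _)
  have hF_tsum (a : α) : ∑' k, F k a = cexp (w * c a) * f a := by
    rw [Complex.exp_eq_exp_ℂ, NormedSpace.exp_eq_tsum_div, ← tsum_mul_right]
    congr 1 with k
    ring
  simpa only [F, integral_const_mul, hF_tsum] using
    hasSum_integral_of_summable_integral_norm hF_int hF_sum

/-- Stands in for `J_m(z) / (z/2)^m`, which would take a junk value at `z = 0`. -/
noncomputable def besselJReduced (m : ℕ) (z : ℝ) : ℝ :=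
  ∑' k : ℕ, (-1 : ℝ) ^ k / (k ! * (k + m)!) * (z / 2) ^ (2 * k)

lemma summable_besselJReduced (m : ℕ) (z : ℝ) :
    Summable fun k : ℕ => (-1 : ℝ) ^ k / (k ! * (k + m)!) * (z / 2) ^ (2 * k) := by
  refine .of_norm_bounded (Real.summable_pow_div_factorial ((z / 2) ^ 2)) fun k => ?_
  rw [norm_mul, norm_div, norm_pow, norm_neg, norm_one, one_pow, pow_mul, norm_pow,
    Real.norm_of_nonneg (sq_nonneg _), Real.norm_of_nonneg (by positivity), one_div_mul_eq_div]
  gcongr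
  exact le_mul_of_one_le_right (by positivity) (by exact_mod_cast (k + m).factorial_pos)

lemma besselJ_eq_pow_mul_besselJReduced (m : ℕ) (z : ℝ) :
    besselJ m z = (z / 2) ^ m * besselJReduced m z := by
  rw [besselJ, besselJReduced, ← tsum_mul_left]
  congr 1 with k
  ring

lemma integral_cos_pow_mul_sin_sq (n : ℕ) :
    ∫ x in (0)..π, cos x ^ n * sin x ^ 2 = (∫ x in (0)..π, cos x ^ n) / (n + 2) := by
  have h (x : ℝ) : cos x ^ n * sin x ^ 2 = cos x ^ n - cos x ^ (n + 2) := by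
    rw [sin_sq]; ring
  simp_rw [h]
  rw [intervalIntegral.integral_sub (by apply Continuous.intervalIntegrable; fun_prop)
    (by apply Continuous.intervalIntegrable; fun_prop), integral_cos_pow]
  simp only [sin_pi, sin_zero, mul_zero, sub_self, zero_div, zero_add]
  field_simp
  ring

lemma integral_cos_pow_even (j : ℕ) :
    ∫ x in (0)..π, cos x ^ (2 * j) = π * (2 * j)! / (4 ^ j * j ! ^ 2) := by
  induction j with
  | zero => simp
  | succ j ih =>
    rw [_root_.mul_add_one, integral_cos_pow, ih, Nat.factorial_succ (2 * j + 1),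
      Nat.factorial_succ (2 * j), Nat.factorial_succ j]
    simp only [sin_pi, sin_zero, mul_zero, sub_self, zero_div, zero_add]
    push_cast
    field_simp
    ring

lemma integral_cos_pow_odd (j : ℕ) : ∫ x in (0)..π, cos x ^ (2 * j + 1) = 0 := by
  simpa using integral_sin_pow_mul_cos_pow_odd (a := 0) (b := π) 0 j

lemma integral_cos_pow_even_mul_sin_sq (j : ℕ) :
    ∫ x in (0)..π, cos x ^ (2 * j) * sin x ^ 2 = π * (2 * j)! / (2 * 4 ^ j * j ! * (j + 1)!) := by
  rw [integral_cos_pow_mul_sin_sq, integral_cos_pow_even, Nat.factorial_succ]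
  push_cast
  field_simp

lemma integral_cos_pow_odd_mul_sin_sq (j : ℕ) :
    ∫ x in (0)..π, cos x ^ (2 * j + 1) * sin x ^ 2 = 0 := by
  rw [integral_cos_pow_mul_sin_sq, integral_cos_pow_odd, zero_div]

noncomputable def sinSqCosPowCharFun (m : ℕ) (z : ℝ) : ℂ :=
  ∫ θ in Set.Icc 0 π, cexp (I * z * cos θ) * ((sin θ ^ 2 * cos θ ^ m : ℝ) : ℂ)

lemma hasSum_sinSqCosPowCharFun (m : ℕ) (z : ℝ) :
    HasSum (fun k : ℕ => (I * z) ^ k / k ! *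
        ((∫ x in (0)..π, cos x ^ (k + m) * sin x ^ 2 : ℝ) : ℂ))
      (sinSqCosPowCharFun m z) := by
  rw [sinSqCosPowCharFun]
  have h := hasSum_integral_cexp_mul_pow (μ := volume.restrict (Set.Icc 0 π))
    (c := fun θ => (cos θ : ℂ)) (f := fun θ => ((sin θ ^ 2 * cos θ ^ m : ℝ) : ℂ)) (C := 1)
    (by fun_prop) (fun θ => by rw [Complex.norm_real, norm_eq_abs]; exact abs_cos_le_one θ)
    (Continuous.integrableOn_Icc (by fun_prop)) (I * z)
  convert h using 3 with k
  rw [intervalIntegral.integral_of_le pi_pos.le, ← integral_Icc_eq_integral_Ioc,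
    ← integral_complex_ofReal]
  congr 1 with θ
  push_cast
  ring

lemma sinSqCosPowCharFun_eq_add_I_mul (m : ℕ) (z : ℝ) {A B : ℝ}
    (hA : HasSum (fun j : ℕ => (-1) ^ j * z ^ (2 * j) / (2 * j)! *
      ∫ x in (0)..π, cos x ^ (2 * j + m) * sin x ^ 2) A)
    (hB : HasSum (fun j : ℕ => (-1) ^ j * z ^ (2 * j + 1) / (2 * j + 1)! *
      ∫ x in (0)..π, cos x ^ (2 * j + 1 + m) * sin x ^ 2) B) :
    sinSqCosPowCharFun m z = A + I * B := by
  refine (hasSum_sinSqCosPowCharFun m z).unique (HasSum.even_add_odd ?_ ?_)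
  · refine (Complex.hasSum_ofReal.2 hA).congr_fun fun j => ?_
    rw [mul_pow, pow_mul, Complex.I_sq]
    push_cast
    ring
  · refine ((Complex.hasSum_ofReal.2 hB).mul_left I).congr_fun fun j => ?_
    rw [mul_pow, pow_succ, pow_mul, Complex.I_sq]
    push_cast
    ring

lemma sinSqCosPowCharFun_zero (z : ℝ) :
    sinSqCosPowCharFun 0 z = ((π / 2 * besselJReduced 1 z : ℝ) : ℂ) := by
  rw [sinSqCosPowCharFun_eq_add_I_mul 0 z (A := π / 2 * besselJReduced 1 z) (B := 0),
    Complex.ofReal_zero, mul_zero, add_zero]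
  · refine ((summable_besselJReduced 1 z).hasSum.mul_left _).congr_fun fun j => ?_
    rw [add_zero, integral_cos_pow_even_mul_sin_sq, mul_div_assoc, div_pow, pow_mul, pow_mul]
    field_simp
    ring
  · exact hasSum_zero.congr_fun fun j => by rw [add_zero, integral_cos_pow_odd_mul_sin_sq, mul_zero]

lemma sinSqCosPowCharFun_one (z : ℝ) :
    sinSqCosPowCharFun 1 z = I * ((π * z / 4 * besselJReduced 2 z : ℝ) : ℂ) := by
  rw [sinSqCosPowCharFun_eq_add_I_mul 1 z (A := 0) (B := π * z / 4 * besselJReduced 2 z),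
    Complex.ofReal_zero, zero_add]
  · exact hasSum_zero.congr_fun fun j => by rw [integral_cos_pow_odd_mul_sin_sq, mul_zero]
  · refine ((summable_besselJReduced 2 z).hasSum.mul_left _).congr_fun fun j => ?_
    rw [show 2 * j + 1 + 1 = 2 * (j + 1) by ring, integral_cos_pow_even_mul_sin_sq,
      show 2 * (j + 1) = 2 * j + 1 + 1 by ring, Nat.factorial_succ (2 * j + 1),
      Nat.factorial_succ (j + 1), Nat.factorial_succ j, mul_div_assoc, div_pow, pow_mul, pow_mul]
    push_cast
    field_simp
    ring

lemma sinSqCosPowCharFun_two (z : ℝ) :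
    sinSqCosPowCharFun 2 z =
      ((π / 2 * besselJReduced 1 z - 3 * π / 4 * besselJReduced 2 z : ℝ) : ℂ) := by
  rw [sinSqCosPowCharFun_eq_add_I_mul 2 z
    (A := π / 2 * besselJReduced 1 z - 3 * π / 4 * besselJReduced 2 z) (B := 0),
    Complex.ofReal_zero, mul_zero, add_zero]
  · refine (((summable_besselJReduced 1 z).hasSum.mul_left _).sub
      ((summable_besselJReduced 2 z).hasSum.mul_left _)).congr_fun fun j => ?_
    rw [show 2 * j + 2 = 2 * (j + 1) by ring, integral_cos_pow_even_mul_sin_sq,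
      show 2 * (j + 1) = 2 * j + 1 + 1 by ring, Nat.factorial_succ (2 * j + 1),
      Nat.factorial_succ (2 * j), Nat.factorial_succ (j + 1), Nat.factorial_succ j,
      mul_div_assoc, div_pow, pow_mul, pow_mul]
    push_cast
    field_simp
    ring
  · exact hasSum_zero.congr_fun fun j => by
      rw [show 2 * j + 1 + 2 = 2 * (j + 1) + 1 by ring, integral_cos_pow_odd_mul_sin_sq, mul_zero]

lemma integral_cexp_mul_weylDensity2 (z : ℝ) :
    ∫ θ in Set.Icc 0 π ×ˢ Set.Icc 0 π,
        cexp (I * z * ((cos θ.1 : ℂ) + (cos θ.2 : ℂ))) * ((weylDensity2 θ.1 θ.2 : ℝ) : ℂ)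
      = 16 / (π : ℂ) ^ 2 * (sinSqCosPowCharFun 0 z * sinSqCosPowCharFun 2 z
          - sinSqCosPowCharFun 1 z ^ 2) := by
  set g : ℕ → ℝ → ℂ := fun m x => cexp (I * z * cos x) * ((sin x ^ 2 * cos x ^ m : ℝ) : ℂ)
  have hintegrable {f : ℝ × ℝ → ℂ} (hf : Continuous f) :
      IntegrableOn f (Set.Icc 0 π ×ˢ Set.Icc 0 π) :=
    hf.continuousOn.integrableOn_compact (isCompact_Icc.prod isCompact_Icc)
  have hsplit (θ : ℝ × ℝ) :
      cexp (I * z * ((cos θ.1 : ℂ) + (cos θ.2 : ℂ))) * ((weylDensity2 θ.1 θ.2 : ℝ) : ℂ)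
        = 8 / (π : ℂ) ^ 2 * (g 2 θ.1 * g 0 θ.2 - 2 * (g 1 θ.1 * g 1 θ.2) + g 0 θ.1 * g 2 θ.2) := by
    simp only [g, weylDensity2]
    rw [mul_add, Complex.exp_add]
    push_cast
    ring
  simp_rw [hsplit]
  rw [integral_const_mul, integral_add (hintegrable (by fun_prop)) (hintegrable (by fun_prop)),
    integral_sub (hintegrable (by fun_prop)) (hintegrable (by fun_prop)), integral_const_mul,
    Measure.volume_eq_prod, setIntegral_prod_mul, setIntegral_prod_mul, setIntegral_prod_mul]
  simp only [g, sinSqCosPowCharFun]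
  ring

/-- The characteristic function of the trace distribution on `USp₄`:
`∫_{[0,π]²} e^{2it(cosθ₁+cosθ₂)} δ₂(θ₁,θ₂) dθ₁dθ₂
  = 4 J₁(2t)²/t² − 6 J₁(2t)J₂(2t)/t³ + 4 J₂(2t)²/t²` for `t ≠ 0`. -/
theorem charFun_trace_USp4 (t : ℝ) (ht : t ≠ 0) :
    ∫ θ in (Set.Icc (0 : ℝ) Real.pi) ×ˢ (Set.Icc (0 : ℝ) Real.pi),
        Complex.exp (2 * Complex.I * (t : ℂ) * ((Real.cos θ.1 : ℂ) + (Real.cos θ.2 : ℂ))) *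
          ((weylDensity2 θ.1 θ.2 : ℝ) : ℂ)
      = ((4 * besselJ 1 (2 * t) ^ 2 / t ^ 2
          - 6 * besselJ 1 (2 * t) * besselJ 2 (2 * t) / t ^ 3
          + 4 * besselJ 2 (2 * t) ^ 2 / t ^ 2 : ℝ) : ℂ) := by
  simp_rw [show 2 * I * (t : ℂ) = I * ((2 * t : ℝ) : ℂ) by push_cast; ring]
  rw [integral_cexp_mul_weylDensity2, sinSqCosPowCharFun_zero, sinSqCosPowCharFun_one,
    sinSqCosPowCharFun_two, besselJ_eq_pow_mul_besselJReduced 1,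
    besselJ_eq_pow_mul_besselJReduced 2]
  have hπ : (π : ℂ) ≠ 0 := Complex.ofReal_ne_zero.2 pi_ne_zero
  have ht' : (t : ℂ) ≠ 0 := Complex.ofReal_ne_zero.2 ht
  push_cast
  rw [mul_pow I, Complex.I_sq]
  field_simp
  ring
end

section
/- Let g ≥ 1 and let 𝐬 : ℝ^g → ℝ^g be the Viète map 𝐬(t) = (e₁(t), …, e_g(t)). Then 𝐬 is differentiable, and for every t ∈ ℝ^g the absolute value of the determinant of its Jacobian matrix at t equals ∏_{1≤j<k≤g} |t_k − t_j|. -/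
/-- The elementary symmetric polynomial of degree `k` in `g` variables. -/
def esymm (g k : ℕ) (t : Fin g → ℝ) : ℝ :=
  ∑ s ∈ Finset.univ.powersetCard k, ∏ j ∈ s, t j

/-- The Viète map `𝐬(t) = (e₁(t), …, e_g(t))`. -/
def viete (g : ℕ) (t : Fin g → ℝ) : Fin g → ℝ := fun i => esymm g ((i : ℕ) + 1) t

/-!
Column `j` of the Jacobian matrix `J` of the Viète map lists the elementary symmetric functions
of the `t_i` with `i ≠ j`, which by Vieta's formula are, up to sign, the coefficients of
`∏_{i ≠ j} (u - t_i)`. Hence multiplying `J` on the left by a Vandermonde matrix (with reversed,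
sign-twisted columns) yields the diagonal matrix with entries `∏_{i ≠ j} (t_j - t_i)`, whose
determinant is `± V²`, where `V = ∏_{j<k} (t_k - t_j)` is the Vandermonde determinant. Thus
`|V| |det J| = V²`, so `|det J| = |V|` when the `t_j` are distinct; when `t_j = t_k` the columns
`j` and `k` of `J` coincide and both sides vanish.
-/

open Finset Matrix

theorem Finset.sum_filter_mem_powersetCard_succ_erase {α M : Type*} [DecidableEq α]
    [AddCommMonoid M] {S : Finset α} {j : α} (hj : j ∈ S) (n : ℕ) (f : Finset α → M) :
    ∑ s ∈ S.powersetCard (n + 1) with j ∈ s, f (s.erase j) =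
      ∑ u ∈ (S.erase j).powersetCard n, f u := by
  refine sum_nbij' (·.erase j) (insert j) ?_ ?_ ?_ ?_ (fun _ _ => rfl)
  · intro s hs
    simp only [mem_filter, mem_powersetCard] at hs ⊢
    exact ⟨erase_subset_erase j hs.1.1, by rw [card_erase_of_mem hs.2, hs.1.2]; rfl⟩
  · intro u hu
    simp only [mem_filter, mem_powersetCard] at hu ⊢
    have hju : j ∉ u := fun h => by simpa using hu.1 h
    exact ⟨⟨insert_subset hj (hu.1.trans (erase_subset j S)),
      by rw [card_insert_of_notMem hju, hu.2]⟩, mem_insert_self j u⟩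
  · intro s hs
    exact insert_erase (mem_filter.mp hs).2
  · intro u hu
    exact erase_insert fun h => by simpa using (mem_powersetCard.mp hu).1 h

theorem hasFDerivAt_esymm_map_univ {𝕜 ι : Type*} [NontriviallyNormedField 𝕜] [Fintype ι]
    [DecidableEq ι] (k : ℕ) (x : ι → 𝕜) :
    HasFDerivAt (fun y : ι → 𝕜 => (univ.val.map y).esymm (k + 1))
      (∑ j, ((univ.erase j).val.map x).esymm k •
        (ContinuousLinearMap.proj j : (ι → 𝕜) →L[𝕜] 𝕜)) x := by
  simp_rw [Finset.esymm_map_val]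
  refine (HasFDerivAt.fun_sum fun s (_ : s ∈ univ.powersetCard (k + 1)) =>
    hasFDerivAt_finsetProd (𝕜 := 𝕜) (u := s) (x := x)).congr_fderiv ?_
  rw [sum_comm' (t' := univ) (s' := fun j => (univ.powersetCard (k + 1)).filter (j ∈ ·))
    (by simp)]
  refine sum_congr rfl fun j _ => ?_
  rw [← sum_smul, ← sum_filter_mem_powersetCard_succ_erase (mem_univ j) k (fun u => u.prod x)]

theorem Multiset.prod_map_sub_eq_sum_esymm {R : Type*} [CommRing R] (s : Multiset R) (x : R) :
    (s.map (x - ·)).prod =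
      ∑ k ∈ Finset.range (card s + 1), (-1) ^ k * s.esymm k * x ^ (card s - k) := by
  simpa [Polynomial.eval_multiset_prod, Polynomial.eval_finsetSum, mul_assoc] using
    congrArg (Polynomial.eval x) s.prod_X_sub_X_eq_sum_esymm

section Jacobian

variable {R : Type*} [CommRing R] {g : ℕ}

/-- Row `i` holds `∂e_{i+1}/∂t_j = e_i(t_1, …, t̂_j, …, t_g)`. -/
def vieteJacobian (t : Fin g → R) : Matrix (Fin g) (Fin g) R :=
  Matrix.of fun i j => ((univ.erase j).val.map t).esymm i

theorem hasFDerivAt_viete (t : Fin g → ℝ) :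
    HasFDerivAt (viete g) (Matrix.toLin' (vieteJacobian t)).toContinuousLinearMap t := by
  refine hasFDerivAt_pi'' fun i => ?_
  have hcomp : (viete g · i) = fun y => (univ.val.map y).esymm ((i : ℕ) + 1) :=
    funext fun y => by rw [Finset.esymm_map_val]; rfl
  rw [hcomp]
  refine (hasFDerivAt_esymm_map_univ (i : ℕ) t).congr_fderiv ?_
  ext v
  simp [Matrix.toLin'_apply, mulVec, dotProduct, vieteJacobian, mul_comm]

theorem vieteJacobian_apply_eq_of_eq (t : Fin g → R) {j k : Fin g} (h : t j = t k) (i : Fin g) :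
    vieteJacobian t i j = vieteJacobian t i k := by
  classical
  have herase (j : Fin g) : (univ.erase j).val.map t = (univ.val.map t).erase (t j) := by
    rw [erase_val, Multiset.map_erase_of_mem _ _ (mem_univ_val j)]
  simp only [vieteJacobian, of_apply, herase, h]

theorem sum_neg_one_pow_mul_vieteJacobian_mul_pow (t : Fin g → R) (j : Fin g) (x : R) :
    ∑ k : Fin g, (-1) ^ (k : ℕ) * vieteJacobian t k j * x ^ (g - 1 - k) =
      ∏ i ∈ univ.erase j, (x - t i) := by
  have hcard : Multiset.card ((univ.erase j).val.map t) = g - 1 := by simp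
  have hvieta := ((univ.erase j).val.map t).prod_map_sub_eq_sum_esymm x
  rw [hcard, Nat.sub_add_cancel j.pos, Multiset.map_map, ← Fin.sum_univ_eq_sum_range] at hvieta
  exact hvieta.symm

def signedRevVandermonde (t : Fin g → R) : Matrix (Fin g) (Fin g) R :=
  (vandermonde t).submatrix id Fin.revPerm * diagonal fun k : Fin g => (-1) ^ (k : ℕ)

theorem signedRevVandermonde_mul_vieteJacobian (t : Fin g → R) :
    signedRevVandermonde t * vieteJacobian t =
      diagonal fun j => ∏ i ∈ univ.erase j, (t j - t i) := by
  ext m j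
  have hrow :
      (signedRevVandermonde t * vieteJacobian t) m j = ∏ i ∈ univ.erase j, (t m - t i) := by
    rw [← sum_neg_one_pow_mul_vieteJacobian_mul_pow, mul_apply]
    refine sum_congr rfl fun k _ => ?_
    simp only [signedRevVandermonde, mul_diagonal, submatrix_apply, id_eq, vandermonde_apply,
      Fin.revPerm_apply, Fin.val_rev]
    rw [show g - (k + 1) = g - 1 - k by omega]
    ring
  rw [hrow]
  rcases eq_or_ne m j with rfl | hmj
  · rw [diagonal_apply_eq]
  · rw [diagonal_apply_ne _ hmj]
    exact prod_eq_zero (mem_erase.mpr ⟨hmj, mem_univ m⟩) (sub_self _)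

end Jacobian

section LinearOrder

variable {R : Type*} [CommRing R] [LinearOrder R] [IsStrictOrderedRing R] {g : ℕ}

theorem abs_det_signedRevVandermonde (t : Fin g → R) :
    |det (signedRevVandermonde t)| = |det (vandermonde t)| := by
  rcases Int.units_eq_one_or (Equiv.Perm.sign (Fin.revPerm : Equiv.Perm (Fin g))) with h | h <;>
    simp [signedRevVandermonde, det_permute', abs_prod, h]

theorem abs_prod_prod_erase_sub (t : Fin g → R) :
    |∏ j, ∏ i ∈ univ.erase j, (t j - t i)| = |det (vandermonde t)| ^ 2 := by
  calc |∏ j, ∏ i ∈ univ.erase j, (t j - t i)| = ∏ j, ∏ i ∈ {j}ᶜ, |t j - t i| := by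
        simp only [abs_prod, compl_singleton]
    _ = ∏ j, ∏ i ∈ Ioi j, |t j - t i| * |t i - t j| :=
        (prod_prod_Ioi_mul_eq_prod_prod_off_diag fun a b => |t b - t a|).symm
    _ = |det (vandermonde t)| ^ 2 := by
        simp_rw [det_vandermonde, abs_prod, ← prod_pow, sq]
        exact prod_congr rfl fun j _ => prod_congr rfl fun i _ => by rw [abs_sub_comm]

theorem abs_det_vieteJacobian (t : Fin g → R) :
    |det (vieteJacobian t)| = |det (vandermonde t)| := by
  by_cases hV : det (vandermonde t) = 0
  · obtain ⟨i, j, hij, hne⟩ := det_vandermonde_eq_zero_iff.mp hV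
    rw [hV, det_zero_of_column_eq hne (vieteJacobian_apply_eq_of_eq t hij)]
  · have hdet := congrArg (|det ·|) (signedRevVandermonde_mul_vieteJacobian t)
    simp only [det_mul, abs_mul, abs_det_signedRevVandermonde, det_diagonal,
      abs_prod_prod_erase_sub, sq] at hdet
    exact mul_left_cancel₀ (abs_ne_zero.mpr hV) hdet

end LinearOrder

theorem viete_differentiable_and_jacobian_general (g : ℕ) :
    Differentiable ℝ (viete g) ∧
    ∀ t : Fin g → ℝ,
      |LinearMap.det ((fderiv ℝ (viete g) t : (Fin g → ℝ) →L[ℝ] (Fin g → ℝ))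
          : (Fin g → ℝ) →ₗ[ℝ] (Fin g → ℝ))|
        = ∏ j : Fin g, ∏ k ∈ Finset.Ioi j, |t k - t j| := by
  refine ⟨fun t => (hasFDerivAt_viete t).differentiableAt, fun t => ?_⟩
  rw [(hasFDerivAt_viete t).fderiv, LinearMap.coe_toContinuousLinearMap, LinearMap.det_toLin',
    abs_det_vieteJacobian, det_vandermonde, abs_prod]
  simp_rw [abs_prod]

/-- The Viète map is differentiable and the absolute value of its Jacobian determinant
at `t` equals `∏_{j<k} |t_k − t_j|`. -/
theorem viete_differentiable_and_jacobian (g : ℕ) (hg : 1 ≤ g) :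
    Differentiable ℝ (viete g) ∧
    ∀ t : Fin g → ℝ,
      |LinearMap.det ((fderiv ℝ (viete g) t : (Fin g → ℝ) →L[ℝ] (Fin g → ℝ))
          : (Fin g → ℝ) →ₗ[ℝ] (Fin g → ℝ))|
        = ∏ j : Fin g, ∏ k ∈ Finset.Ioi j, |t k - t j| :=
  viete_differentiable_and_jacobian_general g
end

section
/- Let g ≥ 1, let 𝐬 : ℝ^g → ℝ^g be the Viète map 𝐬(t) = (e₁(t),…,e_g(t)), and let C_g = {t ∈ ℝ^g : t₁ < t₂ < ⋯ < t_g} be the open fundamental chamber. Then 𝐬 restricted to C_g is injective, its image 𝐬(C_g) equals the set of vectors v = (v₁,…,v_g) ∈ ℝ^g such that the polynomial u^g − v₁u^{g−1} + v₂u^{g−2} − ⋯ + (−1)^g v_g has g distinct real roots, and 𝐬 : C_g → 𝐬(C_g) is a diffeomorphism (i.e. a differentiable bijection with differentiable inverse between open subsets of ℝ^g). -/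
open Polynomial
open Topology

/-- The open fundamental chamber `C_g = {t : t₁ < t₂ < ⋯ < t_g}`. -/
def chamber (g : ℕ) : Set (Fin g → ℝ) := {t | StrictMono t}

/-- The monic polynomial `u^g − v₁u^{g−1} + v₂u^{g−2} − ⋯ + (−1)^g v_g`. -/
noncomputable def vietePoly (g : ℕ) (v : Fin g → ℝ) : ℝ[X] :=
  X ^ g + ∑ i : Fin g, C ((-1 : ℝ) ^ ((i : ℕ) + 1) * v i) * X ^ (g - 1 - (i : ℕ))

lemma vietePoly_coeff_lt {g : ℕ} (hg : 1 ≤ g) (v : Fin g → ℝ) {n : ℕ} (hn : n < g) :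
    (vietePoly g v).coeff n = (-1 : ℝ) ^ (g - n) * v ⟨g - 1 - n, by omega⟩ := by
  rw [vietePoly, coeff_add, coeff_X_pow, if_neg hn.ne, finset_sum_coeff]
  rw [Finset.sum_eq_single (⟨g - 1 - n, by omega⟩ : Fin g)]
  · rw [coeff_C_mul, coeff_X_pow, if_pos (by simp; omega)]
    have h2 : g - 1 - n + 1 = g - n := by omega
    rw [h2, mul_one, zero_add]
  · intro i _ hi
    rw [coeff_C_mul, coeff_X_pow, if_neg, mul_zero]
    intro hcon
    apply hi
    have := i.isLt
    ext
    simp only []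
    omega
  · intro hcon
    exact absurd (Finset.mem_univ _) hcon

lemma natDegree_prod_X_sub_C {g : ℕ} (t : Fin g → ℝ) :
    (∏ j : Fin g, (X - C (t j))).natDegree = g := by
  rw [Polynomial.natDegree_prod]
  · simp
  · intro i _; exact X_sub_C_ne_zero (t i)

lemma monic_prod_X_sub_C {g : ℕ} (t : Fin g → ℝ) :
    (∏ j : Fin g, (X - C (t j))).Monic :=
  monic_prod_of_monic _ _ fun i _ => monic_X_sub_C (t i)

lemma prod_eq_vietePoly {g : ℕ} (hg : 1 ≤ g) (t : Fin g → ℝ) :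
    ∏ j : Fin g, (X - C (t j)) = vietePoly g (viete g t) := by
  ext n
  rcases lt_trichotomy n g with h | h | h
  · rw [vietePoly_coeff_lt hg _ h]
    have hc : (Multiset.card (Finset.univ.val.map t)) = g := by simp
    have key := Multiset.prod_X_sub_C_coeff (Finset.univ.val.map t) (k := n)
      (by rw [hc]; exact h.le)
    have heq : ((Finset.univ.val.map t).map fun r => X - C r).prod
        = ∏ j : Fin g, (X - C (t j)) := by
      rw [Multiset.map_map, Finset.prod]
      rfl
    rw [heq, hc] at key
    rw [key, Finset.esymm_map_val]
    congr 1
    show esymm g (g - n) t = viete g t ⟨g - 1 - n, by omega⟩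
    rw [viete]
    congr 1
    simp only []
    omega
  · have h1 : (∏ j : Fin g, (X - C (t j))).coeff n = 1 := by
      have h2 := (_root_.monic_prod_X_sub_C t).coeff_natDegree
      rw [natDegree_prod_X_sub_C] at h2; rw [h]; exact h2
    rw [h1, vietePoly, coeff_add, coeff_X_pow, if_pos h, finset_sum_coeff,
      Finset.sum_eq_zero, add_zero]
    intro i _
    rw [coeff_C_mul, coeff_X_pow, if_neg (by have := i.isLt; omega), mul_zero]
  · rw [coeff_eq_zero_of_natDegree_lt (by rw [natDegree_prod_X_sub_C]; exact h),
      vietePoly, coeff_add, coeff_X_pow, if_neg h.ne', finset_sum_coeff,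
      Finset.sum_eq_zero, add_zero]
    intro i _
    rw [coeff_C_mul, coeff_X_pow, if_neg (by have := i.isLt; omega), mul_zero]

lemma vietePoly_injective {g : ℕ} (hg : 1 ≤ g) : Function.Injective (vietePoly g) := by
  intro v w h
  funext i
  have hlt : g - 1 - (i : ℕ) < g := by have := i.isLt; omega
  have h1 := congrArg (fun p => p.coeff (g - 1 - (i : ℕ))) h
  simp only [vietePoly_coeff_lt hg _ hlt] at h1
  have h2 : (⟨g - 1 - (g - 1 - (i : ℕ)), by omega⟩ : Fin g) = i := by
    have := i.isLt; ext; simp only []; omega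
  rw [h2] at h1
  exact mul_left_cancel₀ (pow_ne_zero _ (by norm_num)) h1

lemma isOpen_chamber (g : ℕ) : IsOpen (chamber g) := by
  have h : chamber g = ⋂ p : Fin g × Fin g, {t : Fin g → ℝ | p.1 < p.2 → t p.1 < t p.2} := by
    ext t
    simp only [Set.mem_iInter, Set.mem_setOf_eq, chamber]
    exact ⟨fun h p => fun hp => h hp, fun h a b hab => h (a, b) hab⟩
  rw [h]
  refine isOpen_iInter_of_finite fun p => ?_
  by_cases hp : p.1 < p.2
  · have : {t : Fin g → ℝ | p.1 < p.2 → t p.1 < t p.2} = {t | t p.1 < t p.2} := by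
      ext t; simp [hp]
    rw [this]
    exact isOpen_lt (continuous_apply p.1) (continuous_apply p.2)
  · have : {t : Fin g → ℝ | p.1 < p.2 → t p.1 < t p.2} = Set.univ := by
      ext t; simp [hp]
    rw [this]; exact isOpen_univ

lemma multiset_eq_of_prod_eq {g : ℕ} (t t' : Fin g → ℝ)
    (h : ∏ j : Fin g, (X - C (t j)) = ∏ j : Fin g, (X - C (t' j))) :
    Finset.univ.val.map t = Finset.univ.val.map t' := by
  have h1 : ((Finset.univ.val.map t).map fun a => X - C a).prod
      = ((Finset.univ.val.map t').map fun a => X - C a).prod := by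
    rw [Multiset.map_map, Multiset.map_map]; exact h
  have h2 := congrArg Polynomial.roots h1
  rwa [roots_multiset_prod_X_sub_C, roots_multiset_prod_X_sub_C] at h2

lemma range_eq_of_multiset_eq {g : ℕ} {t t' : Fin g → ℝ}
    (h : Finset.univ.val.map t = Finset.univ.val.map t') :
    Set.range t = Set.range t' := by
  ext x
  constructor <;> intro hx
  · obtain ⟨i, hi⟩ := hx
    have : x ∈ Finset.univ.val.map t' := by
      rw [← h]; exact Multiset.mem_map.2 ⟨i, Finset.mem_univ_val i, hi⟩
    obtain ⟨j, _, hj⟩ := Multiset.mem_map.1 this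
    exact ⟨j, hj⟩
  · obtain ⟨i, hi⟩ := hx
    have : x ∈ Finset.univ.val.map t := by
      rw [h]; exact Multiset.mem_map.2 ⟨i, Finset.mem_univ_val i, hi⟩
    obtain ⟨j, _, hj⟩ := Multiset.mem_map.1 this
    exact ⟨j, hj⟩

lemma viete_injOn {g : ℕ} (hg : 1 ≤ g) : Set.InjOn (viete g) (chamber g) := by
  intro t ht t' ht' h
  have h1 : ∏ j : Fin g, (X - C (t j)) = ∏ j : Fin g, (X - C (t' j)) := by
    rw [prod_eq_vietePoly hg, prod_eq_vietePoly hg, h]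
  have ht2 : StrictMono t := ht
  have ht2' : StrictMono t' := ht'
  haveI : WellFoundedLT (Fin g) := Finite.to_wellFoundedLT
  exact (StrictMono.range_inj ht2 ht2').1
    (range_eq_of_multiset_eq (multiset_eq_of_prod_eq t t' h1))

lemma viete_image {g : ℕ} (hg : 1 ≤ g) :
    viete g '' chamber g
      = {v | ∃ r : Fin g → ℝ, Function.Injective r ∧
          vietePoly g v = ∏ j : Fin g, (X - C (r j))} := by
  ext v
  constructor
  · rintro ⟨t, ht, rfl⟩
    exact ⟨t, ht.injective, (prod_eq_vietePoly hg t).symm⟩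
  · rintro ⟨r, hr, hv⟩
    set s : Finset ℝ := Finset.univ.image r with hs
    have hcard : s.card = g := by
      rw [hs, Finset.card_image_of_injective _ hr, Finset.card_univ, Fintype.card_fin]
    set t : Fin g → ℝ := fun i => (s.orderIsoOfFin hcard i : ℝ) with htdef
    have hmono : StrictMono t := fun a b hab => by
      exact_mod_cast (s.orderIsoOfFin hcard).strictMono hab
    have hrange : ∀ x, (∃ i, t i = x) ↔ (∃ i, r i = x) := by
      intro x
      constructor
      · rintro ⟨i, rfl⟩
        have : (s.orderIsoOfFin hcard i : ℝ) ∈ s := (s.orderIsoOfFin hcard i).2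
        obtain ⟨j, _, hj⟩ := Finset.mem_image.1 this
        exact ⟨j, hj⟩
      · rintro ⟨i, rfl⟩
        have : r i ∈ s := Finset.mem_image.2 ⟨i, Finset.mem_univ i, rfl⟩
        obtain ⟨j, hj⟩ := (s.orderIsoOfFin hcard).surjective ⟨r i, this⟩
        exact ⟨j, by rw [htdef]; exact congrArg Subtype.val hj⟩
    have hms : Finset.univ.val.map t = Finset.univ.val.map r := by
      refine Multiset.Nodup.ext ?_ ?_ |>.2 ?_
      · exact Finset.univ.nodup.map hmono.injective
      · exact Finset.univ.nodup.map hr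
      · intro x
        simp only [Multiset.mem_map]
        constructor
        · rintro ⟨i, _, hi⟩
          obtain ⟨j, hj⟩ := (hrange x).1 ⟨i, hi⟩
          exact ⟨j, Finset.mem_univ_val j, hj⟩
        · rintro ⟨i, _, hi⟩
          obtain ⟨j, hj⟩ := (hrange x).2 ⟨i, hi⟩
          exact ⟨j, Finset.mem_univ_val j, hj⟩
    have hprod : ∏ j : Fin g, (X - C (t j)) = ∏ j : Fin g, (X - C (r j)) := by
      have : ((Finset.univ.val.map t).map fun a => X - C a).prod
          = ((Finset.univ.val.map r).map fun a => X - C a).prod := by rw [hms]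
      rw [Multiset.map_map, Multiset.map_map] at this
      exact this
    refine ⟨t, hmono, ?_⟩
    apply vietePoly_injective hg
    rw [← prod_eq_vietePoly hg, hprod, ← hv]

lemma viete_contDiff (g : ℕ) : ContDiff ℝ (⊤ : ℕ∞) (viete g) := by
  apply contDiff_pi.2
  intro i
  simp only [viete, esymm]
  apply ContDiff.sum
  intro s _
  exact contDiff_prod fun j _ => (ContinuousLinearMap.proj j :
    (Fin g → ℝ) →L[ℝ] ℝ).contDiff

lemma eval_vietePoly (g : ℕ) (v : Fin g → ℝ) (x : ℝ) :
    Polynomial.eval x (vietePoly g v)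
      = x ^ g + ∑ i : Fin g, (-1 : ℝ) ^ ((i : ℕ) + 1) * x ^ (g - 1 - (i : ℕ)) * v i := by
  rw [vietePoly]
  simp only [eval_add, eval_pow, eval_X, eval_finset_sum, eval_mul, eval_C]
  congr 1
  exact Finset.sum_congr rfl fun i _ => by ring

lemma deriv_key {g : ℕ} (hg : 1 ≤ g) (t h : Fin g → ℝ)
    (D : (Fin g → ℝ) →L[ℝ] (Fin g → ℝ)) (hD : HasFDerivAt (viete g) D t) (x : ℝ) :
    ∑ i : Fin g, (-1 : ℝ) ^ ((i : ℕ) + 1) * x ^ (g - 1 - (i : ℕ)) * D h i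
      = ∑ j : Fin g, (∏ k ∈ Finset.univ.erase j, (x - t k)) * (-(h j)) := by
  have hψ1 : HasDerivAt (fun s : ℝ => ∏ j : Fin g, (x - (t j + s * h j)))
      (∑ j : Fin g, (∏ k ∈ Finset.univ.erase j, (x - (t k + 0 * h k))) • (-(h j))) 0 := by
    apply HasDerivAt.fun_finsetProd
    intro j _
    exact HasDerivAt.const_sub x ((hasDerivAt_mul_const (h j)).const_add (t j))
  have hc : HasDerivAt (fun s : ℝ => t + s • h) h 0 := by
    simpa using ((hasDerivAt_id (0 : ℝ)).smul_const h).const_add t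
  have hcomp : HasDerivAt (viete g ∘ fun s : ℝ => t + s • h) (D h) 0 := by
    refine HasFDerivAt.comp_hasDerivAt (x := 0) (f := fun s : ℝ => t + s • h) ?_ hc
    simpa using hD
  have hφ : ∀ i : Fin g, HasDerivAt (fun s : ℝ => viete g (t + s • h) i) (D h i) 0 :=
    fun i => (hasDerivAt_pi.1 hcomp) i
  have heq : (fun s : ℝ => ∏ j : Fin g, (x - (t j + s * h j)))
      = fun s : ℝ => x ^ g + ∑ i : Fin g,
          (-1 : ℝ) ^ ((i : ℕ) + 1) * x ^ (g - 1 - (i : ℕ)) * viete g (t + s • h) i := by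
    funext s
    have e1 : ∏ j : Fin g, (x - (t j + s * h j))
        = Polynomial.eval x (∏ j : Fin g, (X - C ((t + s • h) j))) := by
      rw [eval_prod]
      exact Finset.prod_congr rfl fun j _ => by
        simp [Pi.add_apply, Pi.smul_apply, smul_eq_mul]
    rw [e1, prod_eq_vietePoly hg, eval_vietePoly]
  have hψ2 : HasDerivAt (fun s : ℝ => ∏ j : Fin g, (x - (t j + s * h j)))
      (∑ i : Fin g, (-1 : ℝ) ^ ((i : ℕ) + 1) * x ^ (g - 1 - (i : ℕ)) * D h i) 0 := by
    rw [heq]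
    have hsum : HasDerivAt (fun s : ℝ => ∑ i : Fin g,
        (-1 : ℝ) ^ ((i : ℕ) + 1) * x ^ (g - 1 - (i : ℕ)) * viete g (t + s • h) i)
        (∑ i : Fin g, (-1 : ℝ) ^ ((i : ℕ) + 1) * x ^ (g - 1 - (i : ℕ)) * D h i) 0 :=
      HasDerivAt.fun_sum fun i _ =>
        (hφ i).const_mul ((-1 : ℝ) ^ ((i : ℕ) + 1) * x ^ (g - 1 - (i : ℕ)))
    exact hsum.const_add (x ^ g)
  have := hψ2.unique hψ1
  rw [this]
  exact Finset.sum_congr rfl fun j _ => by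
    rw [smul_eq_mul]
    congr 1
    exact Finset.prod_congr rfl fun k _ => by ring

lemma fderiv_injective {g : ℕ} (hg : 1 ≤ g) {t : Fin g → ℝ} (ht : StrictMono t)
    (D : (Fin g → ℝ) →L[ℝ] (Fin g → ℝ)) (hD : HasFDerivAt (viete g) D t) :
    Function.Injective D := by
  have key : ∀ h : Fin g → ℝ, D h = 0 → h = 0 := by
    intro h hDh
    funext i
    have hkey := deriv_key hg t h D hD (t i)
    rw [hDh] at hkey
    simp only [Pi.zero_apply, mul_zero, Finset.sum_const_zero] at hkey
    have hsingle : ∑ j : Fin g, (∏ k ∈ Finset.univ.erase j, (t i - t k)) * (-(h j))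
        = (∏ k ∈ Finset.univ.erase i, (t i - t k)) * (-(h i)) := by
      apply Finset.sum_eq_single
      · intro j _ hj
        rw [Finset.prod_eq_zero (Finset.mem_erase.2 ⟨hj.symm, Finset.mem_univ i⟩)
          (sub_self (t i)), zero_mul]
      · intro hcon; exact absurd (Finset.mem_univ i) hcon
    rw [hsingle] at hkey
    have hprod : (∏ k ∈ Finset.univ.erase i, (t i - t k)) ≠ 0 := by
      apply Finset.prod_ne_zero_iff.2
      intro k hk
      have : k ≠ i := (Finset.mem_erase.1 hk).1
      exact sub_ne_zero_of_ne fun hcon => this (ht.injective hcon.symm)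
    have := (mul_eq_zero.1 hkey.symm).resolve_left hprod
    simpa using this
  intro a b hab
  have : D (a - b) = 0 := by rw [map_sub, hab, sub_self]
  have := key _ this
  exact sub_eq_zero.1 this


/-- The Viète map restricted to the fundamental chamber is injective, its image is the
set of coefficient vectors of monic polynomials with `g` distinct real roots, and it is
a diffeomorphism (differentiable bijection with differentiable inverse) between these
open subsets of `ℝ^g`. -/
theorem viete_diffeo_on_chamber (g : ℕ) (hg : 1 ≤ g) :
    IsOpen (chamber g) ∧
    IsOpen (viete g '' chamber g) ∧
    Set.InjOn (viete g) (chamber g) ∧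
    viete g '' chamber g
      = {v | ∃ r : Fin g → ℝ, Function.Injective r ∧
          vietePoly g v = ∏ j : Fin g, (X - C (r j))} ∧
    DifferentiableOn ℝ (viete g) (chamber g) ∧
    ∃ sinv : (Fin g → ℝ) → (Fin g → ℝ),
      DifferentiableOn ℝ sinv (viete g '' chamber g) ∧
      Set.MapsTo sinv (viete g '' chamber g) (chamber g) ∧
      (∀ t ∈ chamber g, sinv (viete g t) = t) ∧
      (∀ v ∈ viete g '' chamber g, viete g (sinv v) = v) := by
  have hdiff : Differentiable ℝ (viete g) := (viete_contDiff g).differentiable (by simp)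
  have hinj := viete_injOn hg
  have hstrict : ∀ t ∈ chamber g, ∃ e : (Fin g → ℝ) ≃L[ℝ] (Fin g → ℝ),
      HasStrictFDerivAt (viete g) (e : (Fin g → ℝ) →L[ℝ] (Fin g → ℝ)) t := by
    intro t ht
    set D := fderiv ℝ (viete g) t with hDdef
    have hD : HasFDerivAt (viete g) D t := (hdiff t).hasFDerivAt
    have hinjD : Function.Injective D := fderiv_injective hg ht D hD
    have hinjD' : Function.Injective (D : (Fin g → ℝ) →ₗ[ℝ] (Fin g → ℝ)) := hinjD
    have hsurj : Function.Surjective (D : (Fin g → ℝ) →ₗ[ℝ] (Fin g → ℝ)) :=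
      LinearMap.injective_iff_surjective.1 hinjD'
    let el : (Fin g → ℝ) ≃ₗ[ℝ] (Fin g → ℝ) :=
      LinearEquiv.ofBijective (D : (Fin g → ℝ) →ₗ[ℝ] (Fin g → ℝ)) ⟨hinjD', hsurj⟩
    refine ⟨el.toContinuousLinearEquiv, ?_⟩
    have hcoe : (el.toContinuousLinearEquiv : (Fin g → ℝ) →L[ℝ] (Fin g → ℝ)) = D := by
      apply ContinuousLinearMap.ext
      intro y
      rfl
    rw [hcoe]
    exact ((viete_contDiff g).contDiffAt).hasStrictFDerivAt' hD (by simp)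
  have hopenimg : IsOpen (viete g '' chamber g) := by
    rw [isOpen_iff_mem_nhds]
    rintro v ⟨t, ht, rfl⟩
    obtain ⟨e, he⟩ := hstrict t ht
    rw [← he.map_nhds_eq_of_equiv]
    exact Filter.image_mem_map ((isOpen_chamber g).mem_nhds ht)
  set sinv := Function.invFunOn (viete g) (chamber g) with hsinvdef
  have hleft : ∀ t ∈ chamber g, sinv (viete g t) = t := by
    intro t ht
    exact hinj (Function.invFunOn_mem ⟨t, ht, rfl⟩) ht (Function.invFunOn_eq ⟨t, ht, rfl⟩)
  have hright : ∀ v ∈ viete g '' chamber g, viete g (sinv v) = v := by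
    rintro v ⟨t, ht, rfl⟩
    exact Function.invFunOn_eq ⟨t, ht, rfl⟩
  have hmapsto : Set.MapsTo sinv (viete g '' chamber g) (chamber g) := by
    rintro v ⟨t, ht, rfl⟩
    exact Function.invFunOn_mem ⟨t, ht, rfl⟩
  refine ⟨isOpen_chamber g, hopenimg, hinj, viete_image hg, hdiff.differentiableOn,
    sinv, ?_, hmapsto, hleft, hright⟩
  rintro v ⟨t, ht, rfl⟩
  obtain ⟨e, he⟩ := hstrict t ht
  set li := he.localInverse (viete g) e t with hlidef
  have hlv : li (viete g t) = t := he.localInverse_apply_image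
  have hev1 : ∀ᶠ y in 𝓝 (viete g t), viete g (li y) = y := he.eventually_right_inverse
  have hcont : ContinuousAt li (viete g t) := he.localInverse_continuousAt
  have hev2 : ∀ᶠ y in 𝓝 (viete g t), li y ∈ chamber g :=
    hcont.preimage_mem_nhds (by rw [hlv]; exact (isOpen_chamber g).mem_nhds ht)
  have hevEq : sinv =ᶠ[𝓝 (viete g t)] li := by
    filter_upwards [hev1, hev2] with y h1 h2
    have hyimg : y ∈ viete g '' chamber g := ⟨li y, h2, h1⟩
    exact hinj (hmapsto hyimg) h2 (by rw [hright y hyimg, h1])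
  have hdli : DifferentiableAt ℝ li (viete g t) := he.to_localInverse.differentiableAt
  exact (hevEq.differentiableAt_iff.2 hdli).differentiableWithinAt
end

section
/- Let g ≥ 1 and let t = (t₁,…,t_g) ∈ ℂ^g be such that the polynomial ∏_{j=1}^g (u − t_j) has all its coefficients real. Define the power sums p_k = Σ_{j=1}^g t_j^k for k ≥ 0 (these are real numbers under the hypothesis), and let B be the g×g real matrix with entries B_{i,j} = p_{i+j−2} for 1 ≤ i, j ≤ g. Then B is positive definite if and only if all the t_j are real and pairwise distinct. -/
/-!
Over `ℂ` the Hankel matrix of power sums factors as `Vᵀ V`, with `V` the Vandermonde matrix of `t`.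
If the `t_j` are real and distinct, `V` is real and invertible, so `Vᵀ V` is positive definite.
Conversely, if `B` is positive definite then so is its hermitian form on `ℂ^g`; this forces
`det V ≠ 0`, and if some `t_a` were not real, its conjugate would be another root `t_b`
(the coefficients are real), and the vector `w` with `V w = e_a` would give
`w^* (Vᵀ V) w = (V w̄)_a = conj ((V w)_b) = 0`.
-/

open Polynomial Matrix ComplexConjugate Function
open scoped MatrixOrder ComplexOrder

theorem Polynomial.eval_conj_of_im_coeff_eq_zero {p : ℂ[X]}
    (hp : ∀ k, (p.coeff k).im = 0) (z : ℂ) : p.eval (conj z) = conj (p.eval z) := by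
  simp only [eval_eq_sum_range, map_sum, map_mul, map_pow, Complex.conj_eq_iff_im.mpr (hp _)]

theorem exists_eq_conj_of_im_coeff_prod_X_sub_C_eq_zero {ι : Type*} [Fintype ι] {t : ι → ℂ}
    (hreal : ∀ k, ((∏ j, (X - C (t j))).coeff k).im = 0) (a : ι) : ∃ b, t b = conj (t a) := by
  have hroot : (∏ j, (X - C (t j))).eval (conj (t a)) = 0 := by
    rw [eval_conj_of_im_coeff_eq_zero hreal, eval_prod,
      Finset.prod_eq_zero (Finset.mem_univ a) (by simp), map_zero]
  rw [eval_prod, Finset.prod_eq_zero_iff] at hroot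
  obtain ⟨b, -, hb⟩ := hroot
  exact ⟨b, (sub_eq_zero.mp (by simpa using hb)).symm⟩

namespace Matrix

variable {n : Type*} [Fintype n] [DecidableEq n]

theorem PosDef.map_ofReal {𝕜 : Type*} [RCLike 𝕜] {A : Matrix n n ℝ} (hA : A.PosDef) :
    (A.map ((↑) : ℝ → 𝕜)).PosDef := by
  obtain ⟨M, rfl⟩ := CStarAlgebra.nonneg_iff_eq_star_mul_self.mp hA.posSemidef.nonneg
  have hmap : (star M * M).map ((↑) : ℝ → 𝕜) = (M.map (↑))ᴴ * M.map (↑) := by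
    rw [star_eq_conjTranspose, ← conjTranspose_map _ fun _ ↦ by simp]
    exact Matrix.map_mul (f := algebraMap ℝ 𝕜)
  rw [hmap, (posSemidef_conjTranspose_mul_self _).posDef_iff_det_ne_zero, ← hmap]
  exact (RingHom.map_det (algebraMap ℝ 𝕜) _).symm.trans_ne (by simpa using hA.det_pos.ne')

theorem injective_of_posDef_transpose_vandermonde_mul_vandermonde {K : Type*} [Field K]
    [PartialOrder K] [StarRing K] {m : ℕ} {t : Fin m → K}
    (h : ((vandermonde t)ᵀ * vandermonde t).PosDef) : Injective t := by
  have hdet := (isUnit_iff_isUnit_det _).mp h.isUnit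
  rw [det_mul, det_transpose] at hdet
  exact det_vandermonde_ne_zero_iff.mp (isUnit_of_mul_isUnit_right hdet).ne_zero

theorem posDef_transpose_vandermonde_mul_vandermonde {m : ℕ} {r : Fin m → ℝ} (hr : Injective r) :
    ((vandermonde r)ᵀ * vandermonde r).PosDef :=
  .conjTranspose_mul_self _ <| mulVec_injective_iff_isUnit.mpr <|
    (isUnit_iff_isUnit_det _).mpr (det_vandermonde_ne_zero_iff.mpr hr).isUnit

theorem not_posDef_transpose_vandermonde_mul_vandermonde_of_conj {m : ℕ} {t : Fin m → ℂ}
    (ht : Injective t) {a b : Fin m} (hab : b ≠ a) (hb : t b = conj (t a)) :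
    ¬ ((vandermonde t)ᵀ * vandermonde t).PosDef := by
  set V := vandermonde t
  have hV : IsUnit V.det := (det_vandermonde_ne_zero_iff.mpr ht).isUnit
  set w := V⁻¹ *ᵥ Pi.single a 1
  have hVw : V *ᵥ w = Pi.single a 1 := by
    rw [mulVec_mulVec, mul_nonsing_inv _ hV, one_mulVec]
  have hw : w ≠ 0 := by
    intro hw
    simpa [hw] using congrFun hVw a
  have hVw_star : (V *ᵥ star w) a = star ((V *ᵥ w) b) := by
    simp [V, mulVec, dotProduct, vandermonde_apply, hb]
  have hzero : star w ⬝ᵥ (Vᵀ * V) *ᵥ w = 0 := by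
    rw [← mulVec_mulVec, dotProduct_mulVec, vecMul_transpose, hVw, dotProduct_single, mul_one,
      hVw_star, hVw, Pi.single_eq_of_ne hab, star_zero]
  exact fun h ↦ (h.dotProduct_mulVec_pos hw).ne' hzero

end Matrix

theorem bezoutian_posDef_iff_general (g : ℕ) (t : Fin g → ℂ)
    (hreal : ∀ n : ℕ, ((∏ j : Fin g, (X - C (t j)) : ℂ[X]).coeff n).im = 0)
    (B : Matrix (Fin g) (Fin g) ℝ)
    (hB : ∀ i j : Fin g, ((B i j : ℝ) : ℂ) = ∑ l : Fin g, t l ^ ((i : ℕ) + (j : ℕ))) :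
    B.PosDef ↔ ((∀ j : Fin g, (t j).im = 0) ∧ Function.Injective t) := by
  have hBt : B.map ((↑) : ℝ → ℂ) = (vandermonde t)ᵀ * vandermonde t := by
    ext i j
    rw [vandermonde_transpose_mul_vandermonde]
    exact hB i j
  constructor
  · intro hpos
    have hposC := hBt ▸ hpos.map_ofReal (𝕜 := ℂ)
    have ht := injective_of_posDef_transpose_vandermonde_mul_vandermonde hposC
    refine ⟨fun a ↦ ?_, ht⟩
    by_contra ha
    obtain ⟨b, hb⟩ := exists_eq_conj_of_im_coeff_prod_X_sub_C_eq_zero hreal a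
    have hba : b ≠ a := by
      rintro rfl
      exact ha (Complex.conj_eq_iff_im.mp hb.symm)
    exact not_posDef_transpose_vandermonde_mul_vandermonde_of_conj ht hba hb hposC
  · rintro ⟨hre, ht⟩
    set r : Fin g → ℝ := fun j ↦ (t j).re
    have htr (j : Fin g) : (r j : ℂ) = t j := Complex.ext rfl (by simp [r, hre j])
    have hBr : B = (vandermonde r)ᵀ * vandermonde r := by
      ext i j
      apply Complex.ofReal_injective
      simp [vandermonde_transpose_mul_vandermonde, htr, hB]
    rw [hBr]
    exact posDef_transpose_vandermonde_mul_vandermonde fun i j h ↦ ht (by rw [← htr, h, htr])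

/-- Sylvester's criterion via the bezoutian: let `t ∈ ℂ^g` be such that the monic
polynomial `∏ (u − t_j)` has real coefficients, and let `B` be the real `g×g` Hankel
matrix of the power sums, `B i j = p_{i+j}` (`0`-indexed), where `p_k = Σ_l t_l^k`.
Then `B` is positive definite iff all the `t_j` are real and pairwise distinct. -/
theorem bezoutian_posDef_iff (g : ℕ) (hg : 1 ≤ g) (t : Fin g → ℂ)
    (hreal : ∀ n : ℕ, ((∏ j : Fin g, (X - C (t j)) : ℂ[X]).coeff n).im = 0)
    (B : Matrix (Fin g) (Fin g) ℝ)
    (hB : ∀ i j : Fin g, ((B i j : ℝ) : ℂ) = ∑ l : Fin g, t l ^ ((i : ℕ) + (j : ℕ))) :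
    B.PosDef ↔ ((∀ j : Fin g, (t j).im = 0) ∧ Function.Injective t) :=
  bezoutian_posDef_iff_general g t hreal B hB
end
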